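/- Let f : ℝ^n → ℝ be continuous and u : ℝ^n × ℝ^n → ℝ be continuous with u(x,z) ≥ f(x), u(z,z) = f(z). If a subsequence x^{t_j} of the MM iterates converges to z, and the full sequence f(x^t) is non-increasing, then u(z, z) ≤ u(x, z) for all x, i.e., z is a global minimizer of u(·, z). -/

import Mathlib

/-!
The MM iteration is a descent method: `f (x (t+1)) ≤ u (x (t+1)) (x t) ≤ u (x t) (x t) = f (x t)`.
Along the convergent subsequence, `f (x (φ j)) = u (x (φ j)) (x (φ j)) → u z z`, so the monotone
sequence `f ∘ x` converges to `u z z`, and in particular so does `f (x (φ j + 1))`. Passing to the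
limit in `f (x (φ j + 1)) ≤ u (x (φ j + 1)) (x (φ j)) ≤ u y (x (φ j))` gives `u z z ≤ u y z`.
-/

open Filter Topology

section MajorizationMinimization

variable {α β : Type*} {f : α → β} {u : α → α → β} {x : ℕ → α}

theorem antitone_comp_of_majorize_minimize [Preorder β] (hmaj : ∀ x z, f x ≤ u x z)
    (htight : ∀ z, u z z = f z) (hstep : ∀ t, u (x (t + 1)) (x t) ≤ u (x t) (x t)) :
    Antitone (f ∘ x) :=
  antitone_nat_of_succ_le fun t =>
    calc f (x (t + 1)) ≤ u (x (t + 1)) (x t) := hmaj _ _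
      _ ≤ u (x t) (x t) := hstep t
      _ = f (x t) := htight _

theorem tendsto_comp_of_antitone_of_subseq_tendsto [TopologicalSpace α] [TopologicalSpace β]
    [ConditionallyCompleteLinearOrder β] [OrderTopology β] [NoMinOrder β] {z : α} {φ : ℕ → ℕ}
    (hu : ContinuousAt (fun p : α × α => u p.1 p.2) (z, z)) (htight : ∀ z, u z z = f z)
    (hanti : Antitone (f ∘ x)) (hφ : Tendsto φ atTop atTop)
    (hconv : Tendsto (x ∘ φ) atTop (𝓝 z)) :
    Tendsto (f ∘ x) atTop (𝓝 (u z z)) := by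
  rw [tendsto_iff_tendsto_subseq_of_antitone hanti hφ]
  have hdiag : Tendsto (fun j => u (x (φ j)) (x (φ j))) atTop (𝓝 (u z z)) :=
    hu.tendsto.comp (hconv.prodMk_nhds hconv)
  simp only [htight] at hdiag ⊢
  exact hdiag

end MajorizationMinimization

theorem mm_limit_point_minimizes_surrogate_general {n : ℕ}
    (f : EuclideanSpace ℝ (Fin n) → ℝ)
    (u : EuclideanSpace ℝ (Fin n) → EuclideanSpace ℝ (Fin n) → ℝ)
    (hu : Continuous (fun p : EuclideanSpace ℝ (Fin n) × EuclideanSpace ℝ (Fin n) => u p.1 p.2))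
    (hmaj : ∀ x z, f x ≤ u x z) (htight : ∀ z, u z z = f z)
    (x : ℕ → EuclideanSpace ℝ (Fin n))
    (hiter : ∀ t, ∀ y, u (x (t + 1)) (x t) ≤ u y (x t))
    (z : EuclideanSpace ℝ (Fin n))
    (φ : ℕ → ℕ) (hφ : StrictMono φ)
    (hconv : Tendsto (fun j => x (φ j)) atTop (𝓝 z)) :
    ∀ y, u z z ≤ u y z := by
  intro y
  have hdescent : Antitone (f ∘ x) :=
    antitone_comp_of_majorize_minimize hmaj htight fun t => hiter t (x t)
  have hvalue : Tendsto (f ∘ x) atTop (𝓝 (u z z)) :=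
    tendsto_comp_of_antitone_of_subseq_tendsto hu.continuousAt htight hdescent
      hφ.tendsto_atTop hconv
  have hnext : Tendsto (fun j => f (x (φ j + 1))) atTop (𝓝 (u z z)) :=
    hvalue.comp ((tendsto_add_atTop_nat 1).comp hφ.tendsto_atTop)
  have hsurrogate : Tendsto (fun j => u y (x (φ j))) atTop (𝓝 (u y z)) :=
    (hu.comp (Continuous.prodMk_right y)).continuousAt.tendsto.comp hconv
  exact le_of_tendsto_of_tendsto' hnext hsurrogate fun j => (hmaj _ _).trans (hiter (φ j) y)

theorem mm_limit_point_minimizes_surrogate {n : ℕ}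
    (f : EuclideanSpace ℝ (Fin n) → ℝ)
    (u : EuclideanSpace ℝ (Fin n) → EuclideanSpace ℝ (Fin n) → ℝ)
    (hf : Continuous f)
    (hu : Continuous (fun p : EuclideanSpace ℝ (Fin n) × EuclideanSpace ℝ (Fin n) => u p.1 p.2))
    (hmaj : ∀ x z, f x ≤ u x z) (htight : ∀ z, u z z = f z)
    (x : ℕ → EuclideanSpace ℝ (Fin n))
    (hiter : ∀ t, ∀ y, u (x (t + 1)) (x t) ≤ u y (x t))
    (hdecr : ∀ t, f (x (t + 1)) ≤ f (x t))
    (z : EuclideanSpace ℝ (Fin n))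
    (φ : ℕ → ℕ) (hφ : StrictMono φ)
    (hconv : Tendsto (fun j => x (φ j)) atTop (𝓝 z)) :
    ∀ y, u z z ≤ u y z :=
  mm_limit_point_minimizes_surrogate_general f u hu hmaj htight x hiter z φ hφ hconv
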